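/- arXiv:1908.05096 — 7 statements merged into one kernel-verified Lean document; each statement's English description precedes it below -/
import Mathlib

section
/- Let μ, λ be real numbers with μ > 0 and λ + μ > 0. Then the complex numbers s₁ = 1, s₂ = (λ+μ)/(λ+3μ), s₃ = −(λ+μ)/(λ+3μ), s₄ = i(λ+μ)/(λ+3μ), s₅ = i(λ+μ)/(λ+3μ) satisfy the following five equations: (i) s₁² = 1; (ii) 2s₁s₂ + s₂² + s₄s₅ − (i(λ+μ)/μ)s₅ − (λ+μ)/μ = 0; (iii) 2s₁s₃ + s₃² + s₄s₅ − (i(λ+μ)/(λ+2μ))s₄ + 1 − μ/(λ+2μ) = 0; (iv) 2s₁s₄ + s₂s₄ + s₃s₄ − (i(λ+μ)/μ)(s₁ + s₃) = 0; (v) 2s₁s₅ + s₂s₅ + s₃s₅ − (i(λ+μ)/(λ+2μ))(s₁ + s₂) = 0. -/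
/-!
Write `c = (λ + μ)/(λ + 3μ)`, so that `s = (1, c, -c, i c, i c)`. Since `s₄ s₅ = -c²`, the
quadratic terms cancel, and what remains of the four nontrivial equations is one of the two
identities `(λ + μ)/μ · (1 - c) = 2c` and `(λ + μ)/(λ + 2μ) · (1 + c) = 2c`, which hold because
`1 - c = 2μ/(λ + 3μ)` and `1 + c = 2(λ + 2μ)/(λ + 3μ)`.
-/

open Complex

section LameRatio

variable {K : Type*} [Field K] {μ lam : K}

theorem lame_mul_one_sub_ratio (hμ : μ ≠ 0) (h3 : lam + 3 * μ ≠ 0) :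
    (lam + μ) / μ * (1 - (lam + μ) / (lam + 3 * μ)) = 2 * ((lam + μ) / (lam + 3 * μ)) := by
  rw [one_sub_div h3, show lam + 3 * μ - (lam + μ) = 2 * μ by ring, mul_div_assoc,
    mul_left_comm, div_mul_div_cancel₀ hμ]

theorem lame_mul_one_add_ratio (h2 : lam + 2 * μ ≠ 0) (h3 : lam + 3 * μ ≠ 0) :
    (lam + μ) / (lam + 2 * μ) * (1 + (lam + μ) / (lam + 3 * μ)) =
      2 * ((lam + μ) / (lam + 3 * μ)) := by
  rw [one_add_div h3, show lam + 3 * μ + (lam + μ) = 2 * (lam + 2 * μ) by ring, mul_div_assoc,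
    mul_left_comm, div_mul_div_cancel₀ h2]

end LameRatio

/-- The explicit values `s₁,…,s₅` solve the five coefficient equations of the
principal-symbol equation for the factorization of the elastic Lamé operator. -/
theorem stmt1 (μ lam : ℝ) (hμ : 0 < μ) (hlam : 0 < lam + μ)
    (s₁ s₂ s₃ s₄ s₅ : ℂ)
    (h₁ : s₁ = 1)
    (h₂ : s₂ = ((lam : ℂ) + μ) / ((lam : ℂ) + 3 * μ))
    (h₃ : s₃ = -(((lam : ℂ) + μ) / ((lam : ℂ) + 3 * μ)))
    (h₄ : s₄ = Complex.I * ((lam : ℂ) + μ) / ((lam : ℂ) + 3 * μ))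
    (h₅ : s₅ = Complex.I * ((lam : ℂ) + μ) / ((lam : ℂ) + 3 * μ)) :
    s₁ ^ 2 = 1 ∧
    2 * s₁ * s₂ + s₂ ^ 2 + s₄ * s₅ - (Complex.I * ((lam : ℂ) + μ) / μ) * s₅
      - ((lam : ℂ) + μ) / μ = 0 ∧
    2 * s₁ * s₃ + s₃ ^ 2 + s₄ * s₅
      - (Complex.I * ((lam : ℂ) + μ) / ((lam : ℂ) + 2 * μ)) * s₄
      + 1 - (μ : ℂ) / ((lam : ℂ) + 2 * μ) = 0 ∧
    2 * s₁ * s₄ + s₂ * s₄ + s₃ * s₄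
      - (Complex.I * ((lam : ℂ) + μ) / μ) * (s₁ + s₃) = 0 ∧
    2 * s₁ * s₅ + s₂ * s₅ + s₃ * s₅
      - (Complex.I * ((lam : ℂ) + μ) / ((lam : ℂ) + 2 * μ)) * (s₁ + s₂) = 0 := by
  have hμ0 : (μ : ℂ) ≠ 0 := by exact_mod_cast hμ.ne'
  have h2 : (lam : ℂ) + 2 * μ ≠ 0 := by exact_mod_cast (by linarith : 0 < lam + 2 * μ).ne'
  have h3 : (lam : ℂ) + 3 * μ ≠ 0 := by exact_mod_cast (by linarith : 0 < lam + 3 * μ).ne'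
  have hsub := lame_mul_one_sub_ratio hμ0 h3
  have hadd := lame_mul_one_add_ratio h2 h3
  have hone : 1 - (μ : ℂ) / ((lam : ℂ) + 2 * μ) = ((lam : ℂ) + μ) / ((lam : ℂ) + 2 * μ) := by
    rw [one_sub_div h2]
    ring
  set c : ℂ := ((lam : ℂ) + μ) / ((lam : ℂ) + 3 * μ)
  have hs₄ : s₄ = I * c := by rw [h₄, mul_div_assoc]
  have hs₅ : s₅ = I * c := by rw [h₅, mul_div_assoc]
  subst h₁ h₂ h₃ hs₄ hs₅
  refine ⟨one_pow 2, ?_, ?_, ?_, ?_⟩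
  · linear_combination (c ^ 2 - ((lam : ℂ) + μ) / μ * c) * I_sq - hsub
  · linear_combination (c ^ 2 - ((lam : ℂ) + μ) / ((lam : ℂ) + 2 * μ) * c) * I_sq + hadd + hone
  · linear_combination -I * hsub
  · linear_combination -I * hadd
end

section
/- Let μ, λ be real numbers with μ > 0 and λ + μ > 0. Then the set of pairs of real numbers (s₂, s₃) satisfying the two equations s₃³ + (4 + s₂)s₃² + (4 − s₂² + 2(λ+μ)/μ)s₃ + (λ+μ)(2λ + 6μ + 2μs₂)/(μ(λ+2μ)) − s₂(2 + s₂)² = 0 and ((λ+μ)/μ + 1)s₃² + (2 + 2(λ+μ)/μ)s₃ − s₂(2 + s₂) + (λ+μ)((λ+2μ) + μ(1 + s₂)²)/(μ(λ+2μ)) = 0 is exactly the three-element set {(−1, −1), (−(3λ+7μ)/(λ+3μ), −(λ+5μ)/(λ+3μ)), ((λ+μ)/(λ+3μ), −(λ+μ)/(λ+3μ))}. -/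
set_option maxHeartbeats 1600000 in
/-- The solution set of the last two equations of the reduced system determining the
principal symbol of the factorization of the elastic Lamé operator consists of exactly
three pairs. -/
theorem stmt2 (μ lam : ℝ) (hμ : 0 < μ) (hlam : 0 < lam + μ) :
    {p : ℝ × ℝ |
      p.2 ^ 3 + (4 + p.1) * p.2 ^ 2 + (4 - p.1 ^ 2 + 2 * (lam + μ) / μ) * p.2
        + (lam + μ) * (2 * lam + 6 * μ + 2 * μ * p.1) / (μ * (lam + 2 * μ))
        - p.1 * (2 + p.1) ^ 2 = 0 ∧
      ((lam + μ) / μ + 1) * p.2 ^ 2 + (2 + 2 * (lam + μ) / μ) * p.2 - p.1 * (2 + p.1)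
        + (lam + μ) * ((lam + 2 * μ) + μ * (1 + p.1) ^ 2) / (μ * (lam + 2 * μ)) = 0} =
    {(-1, -1),
     (-(3 * lam + 7 * μ) / (lam + 3 * μ), -(lam + 5 * μ) / (lam + 3 * μ)),
     ((lam + μ) / (lam + 3 * μ), -(lam + μ) / (lam + 3 * μ))} := by
  have hμ' : μ ≠ 0 := hμ.ne'
  have hb : (0:ℝ) < lam + 2 * μ := by linarith
  have hc : (0:ℝ) < lam + 3 * μ := by linarith
  have hb' : lam + 2 * μ ≠ 0 := hb.ne'
  have hc' : lam + 3 * μ ≠ 0 := hc.ne'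
  have ha' : lam + μ ≠ 0 := hlam.ne'
  ext ⟨x, y⟩
  simp only [Set.mem_setOf_eq, Set.mem_insert_iff, Set.mem_singleton_iff, Prod.mk.injEq]
  constructor
  · rintro ⟨h1, h2⟩
    field_simp at h1 h2
    have key : ((lam + 2*μ)*(y+1) - μ*(x+1)) * ((lam + 2*μ)*(y+1) + μ*(x+1)) = 0 := by
      have hkey : μ * (((lam + 2*μ)*(y+1) - μ*(x+1)) * ((lam + 2*μ)*(y+1) + μ*(x+1))) = 0 := by
        linear_combination μ * h2
      rcases mul_eq_zero.mp hkey with h | h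
      · exact absurd h hμ'
      · exact h
    rcases mul_eq_zero.mp key with hA | hB
    · -- Case A : (lam+2μ)(y+1) = μ(x+1)
      have cubic : ((lam+μ)*(lam+2*μ)) * ((y+1) * ((2*μ - (lam+3*μ)*(y+1)) * (2*μ + (lam+3*μ)*(y+1)))) = 0 := by
        linear_combination μ * μ * h1 -
          ((lam+μ)^3*(1 + 2*y + y^2)
            + μ*(lam+μ)^2*(5 + 9*y + 4*y^2 + x + x*y)
            + μ^2*(lam+μ)*(6 + 11*y + 4*y^2 + 5*x + 3*x*y + x^2)
            + μ^3*(4 + 4*y + y^2 + 4*x + 2*x*y + x^2)) * hA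
      rcases mul_eq_zero.mp cubic with h | h5
      · exact absurd h (mul_pos hlam hb).ne'
      rcases mul_eq_zero.mp h5 with hy | h6
      · -- y = -1, then x = -1
        left
        have hx : μ * (x + 1) = 0 := by linear_combination -hA + (lam + 2*μ) * hy
        rcases mul_eq_zero.mp hx with h | h
        · exact absurd h hμ'
        · exact ⟨by linarith, by linarith⟩
      rcases mul_eq_zero.mp h6 with h7 | h7
      · -- (lam+3μ)(y+1) = 2μ : third solution
        right; right
        have hx : μ * (x * (lam + 3*μ) - (lam + μ)) = 0 := by
          linear_combination -(lam+3*μ) * hA - (lam+2*μ) * h7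
        rcases mul_eq_zero.mp hx with h | h
        · exact absurd h hμ'
        constructor
        · rw [eq_div_iff hc']; linarith
        · have hy : y * (lam + 3*μ) = -(lam+μ) := by linear_combination -h7
          rw [eq_div_iff hc']; linarith
      · -- (lam+3μ)(y+1) = -2μ : second solution
        right; left
        have hx : μ * (x * (lam + 3*μ) + (3*lam + 7*μ)) = 0 := by
          linear_combination -(lam+3*μ) * hA + (lam+2*μ) * h7
        rcases mul_eq_zero.mp hx with h | h
        · exact absurd h hμ'
        constructor
        · rw [eq_div_iff hc']; linarith
        · have hy : y * (lam + 3*μ) = -(lam+5*μ) := by linear_combination h7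
          rw [eq_div_iff hc']; linarith
    · -- Case B : (lam+2μ)(y+1) = -μ(x+1)
      have cubic : ((lam+μ)^2*(lam+2*μ)*(lam+3*μ)) * (y+1)^3 = 0 := by
        linear_combination μ * μ * h1 -
          (-(lam+μ)^3*(1 + 2*y + y^2)
            + μ*(lam+μ)^2*(-1 - 3*y - 2*y^2 + x + x*y)
            + μ^2*(lam+μ)*(2 + y - x + x*y - x^2)
            + μ^3*(2*y + y^2 - 2*x - x^2)) * hB
      left
      rcases mul_eq_zero.mp cubic with h | h
      · exact absurd h (by positivity)
      have hy : y + 1 = 0 := by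
        have := pow_eq_zero_iff (n := 3) (by norm_num) |>.mp h
        exact this
      have hx : μ * (x + 1) = 0 := by linear_combination hB - (lam + 2*μ) * hy
      rcases mul_eq_zero.mp hx with h' | h'
      · exact absurd h' hμ'
      · exact ⟨by linarith, by linarith⟩
  · rintro (⟨hx, hy⟩ | ⟨hx, hy⟩ | ⟨hx, hy⟩) <;> subst hx <;> subst hy <;>
      constructor <;> field_simp [show lam + μ * 2 ≠ 0 by linarith, show lam + μ * 3 ≠ 0 by linarith] <;> ring
end

section
/- Let n ≥ 2 be an integer and let μ, λ be real numbers with μ > 0 and λ + μ > 0. Set s₁ = 1, s₂ = (λ+μ)/(λ+3μ), s₃ = −(λ+μ)/(λ+3μ), s₄ = s₅ = i(λ+μ)/(λ+3μ). Let G be a real symmetric positive-definite (n−1)×(n−1) matrix, let ξ ∈ ℝ^{n−1} be nonzero, set w = √(ξᵀGξ) and η = Gξ. Define n×n complex matrices: q₁ with entries (q₁)_{jk} = s₁ w δ_{jk} + s₂ η_j ξ_k / w, (q₁)_{jn} = s₄ η_j, (q₁)_{nk} = s₅ ξ_k for 1 ≤ j,k ≤ n−1, (q₁)_{nn} = (s₁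 + s₃) w; b₁ with entries (b₁)_{jk} = 0, (b₁)_{jn} = (i(λ+μ)/μ) η_j, (b₁)_{nk} = (i(λ+μ)/(λ+2μ)) ξ_k, (b₁)_{nn} = 0; and c with entries c_{jk} = w² δ_{jk} + ((λ+μ)/μ) η_j ξ_k, c_{jn} = c_{nk} = 0, c_{nn} = (μ/(λ+2μ)) w². Then q₁² − b₁ q₁ − c = 0. -/
open Matrix

/-- An `n×n` matrix given by an `(n-1)×(n-1)` block `f`, a last column `g`, a last
row `h` and a corner entry `d`. -/
def blkMat {m : ℕ} (f : Fin m → Fin m → ℂ) (g : Fin m → ℂ) (h : Fin m → ℂ) (d : ℂ) :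
    Matrix (Fin m ⊕ Unit) (Fin m ⊕ Unit) ℂ :=
  Matrix.of fun i j =>
    match i, j with
    | Sum.inl a, Sum.inl b => f a b
    | Sum.inl a, Sum.inr _ => g a
    | Sum.inr _, Sum.inl b => h b
    | Sum.inr _, Sum.inr _ => d

set_option maxHeartbeats 2000000 in
/-- The explicit principal symbol `q₁` solves the matrix Riccati equation
`q₁² − b₁ q₁ − c = 0` of the factorization of the elastic Lamé operator. -/
theorem stmt4 (n : ℕ) (hn : 2 ≤ n) (μ lam : ℝ) (hμ : 0 < μ) (hlam : 0 < lam + μ)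
    (s₁ s₂ s₃ : ℝ) (s₄ s₅ : ℂ)
    (hs₁ : s₁ = 1) (hs₂ : s₂ = (lam + μ) / (lam + 3 * μ))
    (hs₃ : s₃ = -((lam + μ) / (lam + 3 * μ)))
    (hs₄ : s₄ = Complex.I * (((lam + μ) / (lam + 3 * μ) : ℝ) : ℂ))
    (hs₅ : s₅ = Complex.I * (((lam + μ) / (lam + 3 * μ) : ℝ) : ℂ))
    (G : Matrix (Fin (n - 1)) (Fin (n - 1)) ℝ) (hG : G.PosDef)
    (ξ : Fin (n - 1) → ℝ) (hξ : ξ ≠ 0)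
    (w : ℝ) (hw : w = Real.sqrt (ξ ⬝ᵥ G.mulVec ξ))
    (η : Fin (n - 1) → ℝ) (hη : η = G.mulVec ξ)
    (q₁ b₁ c : Matrix (Fin (n - 1) ⊕ Unit) (Fin (n - 1) ⊕ Unit) ℂ)
    (hq₁ : q₁ = blkMat
      (fun j k => ((s₁ * w * (if j = k then 1 else 0) + s₂ * η j * ξ k / w : ℝ) : ℂ))
      (fun j => s₄ * (η j : ℂ))
      (fun k => s₅ * (ξ k : ℂ))
      (((s₁ + s₃) * w : ℝ) : ℂ))
    (hb₁ : b₁ = blkMat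
      (fun _ _ => 0)
      (fun j => Complex.I * (((lam + μ) / μ * η j : ℝ) : ℂ))
      (fun k => Complex.I * (((lam + μ) / (lam + 2 * μ) * ξ k : ℝ) : ℂ))
      0)
    (hc : c = blkMat
      (fun j k => ((w ^ 2 * (if j = k then 1 else 0) + (lam + μ) / μ * η j * ξ k : ℝ) : ℂ))
      (fun _ => 0)
      (fun _ => 0)
      ((μ / (lam + 2 * μ) * w ^ 2 : ℝ) : ℂ)) :
    q₁ * q₁ - b₁ * q₁ - c = 0 := by
  have hξpos : 0 < ξ ⬝ᵥ G.mulVec ξ := by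
    have := hG.dotProduct_mulVec_pos hξ
    simpa using this
  have hw0 : 0 < w := by rw [hw]; exact Real.sqrt_pos.2 hξpos
  have hw2 : w ^ 2 = ∑ l, ξ l * η l := by
    rw [hw, hη, Real.sq_sqrt hξpos.le]; rfl
  have hwC : (w : ℂ) ≠ 0 := by exact_mod_cast hw0.ne'
  have hμC : (μ : ℂ) ≠ 0 := by exact_mod_cast hμ.ne'
  have h3C : (lam : ℂ) + 3 * μ ≠ 0 := by
    have : (0:ℝ) < lam + 3 * μ := by linarith
    exact_mod_cast this.ne'
  have h2C : (lam : ℂ) + 2 * μ ≠ 0 := by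
    have : (0:ℝ) < lam + 2 * μ := by linarith
    exact_mod_cast this.ne'
  have hsum : (∑ l, (ξ l : ℂ) * (η l : ℂ)) = (w : ℂ) ^ 2 := by
    norm_cast
    exact hw2.symm
  subst hq₁ hb₁ hc hs₁ hs₂ hs₃ hs₄ hs₅
  obtain ⟨S, hSdef⟩ : ∃ x : ℂ, ((lam:ℂ) + μ) / ((lam:ℂ) + 3 * μ) = x := ⟨_, rfl⟩
  obtain ⟨A, hAdef⟩ : ∃ x : ℂ, ((lam:ℂ) + μ) / (μ:ℂ) = x := ⟨_, rfl⟩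
  obtain ⟨B, hBdef⟩ : ∃ x : ℂ, ((lam:ℂ) + μ) / ((lam:ℂ) + 2 * μ) = x := ⟨_, rfl⟩
  obtain ⟨C, hCdef⟩ : ∃ x : ℂ, (μ:ℂ) / ((lam:ℂ) + 2 * μ) = x := ⟨_, rfl⟩
  obtain ⟨m2, hm2⟩ : ∃ x : ℂ, (lam:ℂ) + 2 * μ = x := ⟨_, rfl⟩
  have hS3 : S * ((lam:ℂ) + 3 * μ) = (lam:ℂ) + μ := by
    rw [← hSdef]; exact div_mul_cancel₀ _ h3C
  have hA3 : A * (μ:ℂ) = (lam:ℂ) + μ := by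
    rw [← hAdef]; field_simp
  have hB2 : B * m2 = (lam:ℂ) + μ := by
    rw [← hBdef, ← hm2]; exact div_mul_cancel₀ _ h2C
  have hC2 : C * m2 = (μ:ℂ) := by
    rw [← hCdef, ← hm2]; exact div_mul_cancel₀ _ h2C
  have hm2C : m2 ≠ 0 := by rw [← hm2]; exact h2C
  have hwinv : (w:ℂ)⁻¹ * (w:ℂ) = 1 := inv_mul_cancel₀ hwC
  have id1 : 2*S + A*S - A = 0 := by
    have h : (2*S + A*S - A) * (μ:ℂ) = 0 := by linear_combination (S-1)*hA3 + hS3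
    exact (mul_eq_zero.mp h).resolve_right hμC
  have id2 : 2*S - B - B*S = 0 := by
    have h : (2*S - B - B*S) * m2 = 0 := by linear_combination hS3 - (2*S)*hm2 - (1+S)*hB2
    exact (mul_eq_zero.mp h).resolve_right hm2C
  have id3 : 1 - 2*S + B*S - C = 0 := by
    have h : (1 - 2*S + B*S - C) * m2 = 0 := by linear_combination S*hB2 - hC2 - hS3 + (2*S-1)*hm2
    exact (mul_eq_zero.mp h).resolve_right hm2C
  ext i j
  cases i <;> cases j <;>
    simp [Matrix.mul_apply, blkMat, Fintype.sum_sum_type] <;>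
    simp only [hSdef, hAdef, hBdef, hCdef]
  case inl.inl j k =>
    have hA : ∀ a b c d : ℂ, Complex.I * a * b * (Complex.I * c * d) = -(a * b * (c * d)) := by
      intros a b c d
      rw [show Complex.I * a * b * (Complex.I * c * d)
        = Complex.I * Complex.I * (a * b * (c * d)) by ring, Complex.I_mul_I]
      ring
    have hB : ∀ a c d : ℂ, Complex.I * a * (Complex.I * c * d) = -(a * (c * d)) := by
      intros a c d
      rw [show Complex.I * a * (Complex.I * c * d)
        = Complex.I * Complex.I * (a * (c * d)) by ring, Complex.I_mul_I]
      ring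
    have key : ∀ x : Fin (n - 1),
        ((↑(if j = x then w else 0) + S * (η j : ℂ) * (ξ x : ℂ) / (w:ℂ)) *
          (↑(if x = k then w else 0) + S * (η x : ℂ) * (ξ k : ℂ) / (w:ℂ)) : ℂ)
        = (if j = x then (if x = k then ((w:ℂ) * w) else 0) else 0)
          + (if j = x then (S * (η x : ℂ) * (ξ k : ℂ)) else 0)
          + (if x = k then (S * (η j : ℂ) * (ξ x : ℂ)) else 0)
          + (S * S * (η j : ℂ) * (ξ k : ℂ) / ((w:ℂ) * w)) * ((ξ x : ℂ) * (η x : ℂ)) := by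
      intro x
      by_cases h2 : x = k
      · subst h2
        by_cases h1 : j = x
        · subst h1; simp only [if_true]; field_simp; ring
        · simp only [h1, if_false, if_true, Complex.ofReal_zero]; field_simp; ring
      · by_cases h1 : j = x
        · subst h1; simp only [h2, if_true, if_false, Complex.ofReal_zero]; field_simp; ring
        · simp only [h1, h2, if_false, Complex.ofReal_zero]; field_simp; ring
    simp only [key, Finset.sum_add_distrib, Finset.sum_ite_eq, Finset.sum_ite_eq',
      Finset.mem_univ, if_true, ← Finset.mul_sum, hsum, hA, hB]
    by_cases hjk : j = k
    · subst hjk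
      simp only [if_true]
      push_cast
      linear_combination ((η j : ℂ) * (ξ j : ℂ)) * id1 + (S^2 * (η j : ℂ) * (ξ j : ℂ) * ((w:ℂ)⁻¹ * (w:ℂ) + 1)) * hwinv
    · simp only [hjk, if_false, Complex.ofReal_zero]
      linear_combination ((η j : ℂ) * (ξ k : ℂ)) * id1 + (S^2 * (η j : ℂ) * (ξ k : ℂ) * ((w:ℂ)⁻¹ * (w:ℂ) + 1)) * hwinv
  case inl.inr j _ =>
    have key : ∀ x : Fin (n - 1),
        ((↑(if j = x then w else 0) + S * (η j : ℂ) * (ξ x : ℂ) / (w:ℂ)) *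
          (Complex.I * S * (η x : ℂ)) : ℂ)
        = (if j = x then ((w:ℂ) * (Complex.I * S * (η x : ℂ))) else 0)
          + (Complex.I * S * S * (η j : ℂ) / (w:ℂ)) * ((ξ x : ℂ) * (η x : ℂ)) := by
      intro x
      by_cases h1 : j = x
      · subst h1; simp only [if_true]; field_simp
      · simp only [h1, if_false, Complex.ofReal_zero]; field_simp; ring
    simp only [key, Finset.sum_add_distrib, Finset.sum_ite_eq, Finset.sum_ite_eq',
      Finset.mem_univ, if_true, ← Finset.mul_sum, hsum]
    linear_combination (Complex.I * (η j : ℂ) * (w:ℂ)) * id1 + (Complex.I * (η j : ℂ) * S^2 * (w:ℂ)) * hwinv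
  case inr.inl _ k =>
    have key1 : ∀ x : Fin (n - 1),
        (Complex.I * S * (ξ x : ℂ) *
          (↑(if x = k then w else 0) + S * (η x : ℂ) * (ξ k : ℂ) / (w:ℂ)) : ℂ)
        = (if x = k then (Complex.I * S * (ξ x : ℂ) * (w:ℂ)) else 0)
          + (Complex.I * S * S * (ξ k : ℂ) / (w:ℂ)) * ((ξ x : ℂ) * (η x : ℂ)) := by
      intro x
      by_cases h2 : x = k
      · subst h2; simp only [if_true]; field_simp
      · simp only [h2, if_false, Complex.ofReal_zero]; field_simp; ring
    have key2 : ∀ x : Fin (n - 1),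
        (Complex.I * (B * (ξ x : ℂ)) *
          (↑(if x = k then w else 0) + S * (η x : ℂ) * (ξ k : ℂ) / (w:ℂ)) : ℂ)
        = (if x = k then (Complex.I * B * (ξ x : ℂ) * (w:ℂ)) else 0)
          + (Complex.I * B * S * (ξ k : ℂ) / (w:ℂ)) * ((ξ x : ℂ) * (η x : ℂ)) := by
      intro x
      by_cases h2 : x = k
      · subst h2; simp only [if_true]; field_simp
      · simp only [h2, if_false, Complex.ofReal_zero]; field_simp; ring
    simp only [key1, key2, Finset.sum_add_distrib, Finset.sum_ite_eq, Finset.sum_ite_eq',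
      Finset.mem_univ, if_true, ← Finset.mul_sum, hsum]
    linear_combination (Complex.I * (ξ k : ℂ) * (w:ℂ)) * id2 + (Complex.I * (ξ k : ℂ) * (S^2 - B*S) * (w:ℂ)) * hwinv
  case inr.inr =>
    have key1 : ∀ x : Fin (n - 1),
        (Complex.I * S * (ξ x : ℂ) * (Complex.I * S * (η x : ℂ)) : ℂ)
        = (-(S * S)) * ((ξ x : ℂ) * (η x : ℂ)) := by
      intro x
      rw [show Complex.I * S * (ξ x : ℂ) * (Complex.I * S * (η x : ℂ))
        = Complex.I * Complex.I * (S * S * ((ξ x : ℂ) * (η x : ℂ))) by ring, Complex.I_mul_I]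
      ring
    have key2 : ∀ x : Fin (n - 1),
        (Complex.I * (B * (ξ x : ℂ)) * (Complex.I * S * (η x : ℂ)) : ℂ)
        = (-(B * S)) * ((ξ x : ℂ) * (η x : ℂ)) := by
      intro x
      rw [show Complex.I * (B * (ξ x : ℂ)) * (Complex.I * S * (η x : ℂ))
        = Complex.I * Complex.I * (B * S * ((ξ x : ℂ) * (η x : ℂ))) by ring, Complex.I_mul_I]
      ring
    simp only [key1, key2, ← Finset.mul_sum, hsum]
    linear_combination ((w:ℂ) ^ 2) * id3
end

section
/- Let μ, λ be real numbers with μ > 0 and λ + μ ≥ 0. Set s₁ = 1, s₂ = (λ+μ)/(λ+3μ), s₃ = −(λ+μ)/(λ+3μ), s₄ = s₅ = i(λ+μ)/(λ+3μ), and s̃₁ = 1/2, s̃₃ = (λ+μ)/(4(λ+3μ)), s̃₅ = iμ(λ+μ)/(4(λ+2μ)(λ+3μ)), s̃₇ = (λ+μ)/(4(λ+3μ)), s̃₈ = −i(λ+μ)/(4(λ+3μ)), s̃₁₁ = (λ+μ)²/(4(λ+3μ)²), s̃₁₅ = i(λ+μ)²/(4(λ+3μ)²), s̃₁₉ = iμ(λ+μ)²/(4(λ+2μ)(λ+3μ)²),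 s̃₂₃ = −μ(λ+μ)²/(4(λ+2μ)(λ+3μ)²). Define d₁ = (s₄ − i(λ+μ)/μ)(s̃₅ − s̃₁₉) + (s₁ + s₃)(s̃₁ + s̃₃ + s̃₇ − s̃₁₁) + s₅(s̃₈ + s̃₁₅) + (s₁ + s₂)s̃₂₃ and d₂ = (1/2)(s₁ + s₃)(s̃₁ + s̃₃ + s̃₇ − s̃₁₁) + i(s̃₅ − s̃₁₉) − (1/2)(s₁ + s₂)s̃₂₃ − (iμ/(λ+2μ))(s̃₈ + s̃₁₅). Then d₁ = 2μ(λ+2μ)/(λ+3μ)² and d₂ = μ(λ² + 3λμ + 3μ²)/((λ+2μ)(λ+3μ)²); in particular both d₁ and d₂ are real, and d₂ > 0. -/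
set_option maxHeartbeats 1000000


/-- The coefficients `d₁, d₂` in the `(n,n)`-entry of the degree-zero symbol `q₀` of the
factorization of the elastic Lamé operator are real, with explicit values, and `d₂ > 0`. -/
theorem stmt6 (μ lam : ℝ) (hμ : 0 < μ) (hlam : 0 ≤ lam + μ)
    (s₁ s₂ s₃ : ℂ) (s₄ s₅ : ℂ)
    (hs₁ : s₁ = 1)
    (hs₂ : s₂ = (((lam + μ) / (lam + 3 * μ) : ℝ) : ℂ))
    (hs₃ : s₃ = -(((lam + μ) / (lam + 3 * μ) : ℝ) : ℂ))
    (hs₄ : s₄ = Complex.I * (((lam + μ) / (lam + 3 * μ) : ℝ) : ℂ))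
    (hs₅ : s₅ = Complex.I * (((lam + μ) / (lam + 3 * μ) : ℝ) : ℂ))
    (ts₁ ts₃ ts₅ ts₇ ts₈ ts₁₁ ts₁₅ ts₁₉ ts₂₃ : ℂ)
    (hts₁ : ts₁ = 1 / 2)
    (hts₃ : ts₃ = (((lam + μ) / (4 * (lam + 3 * μ)) : ℝ) : ℂ))
    (hts₅ : ts₅ = Complex.I * ((μ * (lam + μ) / (4 * (lam + 2 * μ) * (lam + 3 * μ)) : ℝ) : ℂ))
    (hts₇ : ts₇ = (((lam + μ) / (4 * (lam + 3 * μ)) : ℝ) : ℂ))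
    (hts₈ : ts₈ = -(Complex.I * (((lam + μ) / (4 * (lam + 3 * μ)) : ℝ) : ℂ)))
    (hts₁₁ : ts₁₁ = (((lam + μ) ^ 2 / (4 * (lam + 3 * μ) ^ 2) : ℝ) : ℂ))
    (hts₁₅ : ts₁₅ = Complex.I * (((lam + μ) ^ 2 / (4 * (lam + 3 * μ) ^ 2) : ℝ) : ℂ))
    (hts₁₉ : ts₁₉ = Complex.I * ((μ * (lam + μ) ^ 2 / (4 * (lam + 2 * μ) * (lam + 3 * μ) ^ 2) : ℝ) : ℂ))
    (hts₂₃ : ts₂₃ = -((μ * (lam + μ) ^ 2 / (4 * (lam + 2 * μ) * (lam + 3 * μ) ^ 2) : ℝ) : ℂ))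
    (d₁ d₂ : ℂ)
    (hd₁ : d₁ = (s₄ - Complex.I * ((lam : ℂ) + μ) / μ) * (ts₅ - ts₁₉)
      + (s₁ + s₃) * (ts₁ + ts₃ + ts₇ - ts₁₁) + s₅ * (ts₈ + ts₁₅) + (s₁ + s₂) * ts₂₃)
    (hd₂ : d₂ = (1 / 2) * (s₁ + s₃) * (ts₁ + ts₃ + ts₇ - ts₁₁) + Complex.I * (ts₅ - ts₁₉)
      - (1 / 2) * (s₁ + s₂) * ts₂₃ - (Complex.I * (μ : ℂ) / ((lam : ℂ) + 2 * μ)) * (ts₈ + ts₁₅)) :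
    d₁ = ((2 * μ * (lam + 2 * μ) / (lam + 3 * μ) ^ 2 : ℝ) : ℂ) ∧
    d₂ = ((μ * (lam ^ 2 + 3 * lam * μ + 3 * μ ^ 2) / ((lam + 2 * μ) * (lam + 3 * μ) ^ 2) : ℝ) : ℂ) ∧
    d₁.im = 0 ∧ d₂.im = 0 ∧ 0 < d₂.re := by
  have h2 : (0:ℝ) < lam + 2 * μ := by linarith
  have h3 : (0:ℝ) < lam + 3 * μ := by linarith
  have hμ0 : μ ≠ 0 := hμ.ne'
  have h20 : lam + 2 * μ ≠ 0 := h2.ne'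
  have h30 : lam + 3 * μ ≠ 0 := h3.ne'
  subst hs₁ hs₂ hs₃ hs₄ hs₅ hts₁ hts₃ hts₅ hts₇ hts₈ hts₁₁ hts₁₅ hts₁₉ hts₂₃
  set p : ℝ := (lam + μ) / (lam + 3 * μ) with hp
  set r : ℝ := μ * (lam + μ) / (4 * (lam + 2 * μ) * (lam + 3 * μ)) with hr
  set t : ℝ := μ * (lam + μ) ^ 2 / (4 * (lam + 2 * μ) * (lam + 3 * μ) ^ 2) with ht
  set w : ℝ := (lam + μ) / (4 * (lam + 3 * μ)) with hw
  set x : ℝ := (lam + μ) ^ 2 / (4 * (lam + 3 * μ) ^ 2) with hx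
  have key1 : d₁ = ((-((p - (lam + μ)/μ) * (r - t)) + (1 - p) * (1/2 + w + w - x)
      - p * (x - w) - (1 + p) * t : ℝ) : ℂ) := by
    rw [hd₁]
    push_cast
    linear_combination (((p : ℂ) - ((lam:ℂ) + μ)/(μ:ℂ)) * ((r:ℂ) - (t:ℂ))
      + (p : ℂ) * ((x:ℂ) - (w:ℂ))) * Complex.I_sq
  have key2 : d₂ = ((1/2 * (1 - p) * (1/2 + w + w - x) - (r - t) + 1/2 * (1 + p) * t
      + (μ / (lam + 2 * μ)) * (x - w) : ℝ) : ℂ) := by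
    rw [hd₂]
    push_cast
    linear_combination (((r:ℂ) - (t:ℂ)) - ((μ:ℂ) / ((lam:ℂ) + 2 * (μ:ℂ))) * ((x:ℂ) - (w:ℂ)))
      * Complex.I_sq
  have e1 : d₁ = ((2 * μ * (lam + 2 * μ) / (lam + 3 * μ) ^ 2 : ℝ) : ℂ) := by
    rw [key1]
    norm_cast
    rw [hp, hr, ht, hw, hx]
    have h30' : lam + μ * 3 ≠ 0 := by rwa [mul_comm μ]
    have h20' : lam + μ * 2 ≠ 0 := by rwa [mul_comm μ]
    field_simp
    ring
  have e2 : d₂ = ((μ * (lam ^ 2 + 3 * lam * μ + 3 * μ ^ 2) / ((lam + 2 * μ) * (lam + 3 * μ) ^ 2) : ℝ) : ℂ) := by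
    rw [key2]
    norm_cast
    rw [hp, hr, ht, hw, hx]
    have h30' : lam + μ * 3 ≠ 0 := by rwa [mul_comm μ]
    have h20' : lam + μ * 2 ≠ 0 := by rwa [mul_comm μ]
    field_simp
    ring
  refine ⟨e1, e2, ?_, ?_, ?_⟩
  · rw [e1]; exact Complex.ofReal_im _
  · rw [e2]; exact Complex.ofReal_im _
  · rw [e2, Complex.ofReal_re]
    have hnum : (0:ℝ) < μ * (lam ^ 2 + 3 * lam * μ + 3 * μ ^ 2) := by nlinarith [mul_nonneg hlam h2.le, sq_nonneg μ, mul_pos hμ hμ]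
    positivity
end

section
/- Let n ≥ 2 be an integer, let μ, λ be real numbers with μ > 0 and λ + μ > 0, and let ξ ∈ ℝ^{n−1} be nonzero. Let P be the n×n complex matrix with entries P_{jk} = μ‖ξ‖δ_{jk} + (μ(λ+μ)/(λ+3μ)) ξ_j ξ_k /‖ξ‖ for 1 ≤ j,k ≤ n−1, P_{jn} = −(2iμ²/(λ+3μ)) ξ_j and P_{nk} = (2iμ²/(λ+3μ)) ξ_k for 1 ≤ j,k ≤ n−1, and P_{nn} = 2μ(λ+2μ)‖ξ‖/(λ+3μ). Then for every τ ∈ ℂ with τ ∉ {μ‖ξ‖, 2μ‖ξ‖, 2μ(λ+μ)‖ξ‖/(λ+3μ)}, the matrix P − τI_n is invertible and Tr((P − τI_n)^{−1}) = (n−2)/(μ‖ξ‖ − τ) + 1/(2μ‖ξ‖ − τ) + 1/(2μ(λ+μ)‖ξ‖/(λ+3μ) − τ). -/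
open Matrix

lemma blk_mul_blk {m : ℕ} (ξ : Fin m → ℂ) (p q g₁ h₁ d₁ p' q' g₂ h₂ d₂ : ℂ) :
    blkMat (fun a b => p * (if a = b then 1 else 0) + q * ξ a * ξ b)
      (fun a => g₁ * ξ a) (fun b => h₁ * ξ b) d₁ *
    blkMat (fun a b => p' * (if a = b then 1 else 0) + q' * ξ a * ξ b)
      (fun a => g₂ * ξ a) (fun b => h₂ * ξ b) d₂
    = blkMat (fun a b => (p * p') * (if a = b then 1 else 0)
        + (p * q' + q * p' + q * q' * (∑ l, ξ l ^ 2) + g₁ * h₂) * ξ a * ξ b)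
      (fun a => (p * g₂ + q * g₂ * (∑ l, ξ l ^ 2) + g₁ * d₂) * ξ a)
      (fun b => (h₁ * p' + h₁ * q' * (∑ l, ξ l ^ 2) + d₁ * h₂) * ξ b)
      (h₁ * g₂ * (∑ l, ξ l ^ 2) + d₁ * d₂) := by
  ext i j
  cases i <;> cases j <;>
    simp only [blkMat, Matrix.mul_apply, Fintype.sum_sum_type, Finset.univ_unique,
      Finset.sum_singleton, of_apply, add_mul, mul_add, Finset.sum_add_distrib,
      mul_ite, ite_mul, mul_zero, zero_mul, mul_one, one_mul,
      Finset.sum_ite_eq, Finset.sum_ite_eq', Finset.mem_univ, if_true] <;>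
    (first | rfl | (ring_nf; simp [sq, Finset.mul_sum, mul_comm, mul_left_comm, mul_assoc]; try ring))


lemma c2aux (u A Δ q B R : ℂ) (hu : u ≠ 0) (hΔ : Δ ≠ 0) (hR : R ≠ 0)
    (hAΔ : Δ = A ^ 2 - B ^ 2 * R ^ 2) (hpq : u + q * R ^ 2 = A) :
    u * ((A / Δ - u⁻¹) / R ^ 2) + q * u⁻¹ + q * ((A / Δ - u⁻¹) / R ^ 2) * R ^ 2
      + -(B ^ 2) / Δ = 0 := by
  have h := mul_inv_cancel₀ hu
  have h2 := mul_inv_cancel₀ hΔ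
  have h3 := mul_inv_cancel₀ (pow_ne_zero 2 hR)
  linear_combination (A / (Δ * R ^ 2)) * hpq - (1 / (Δ * R ^ 2)) * hAΔ
    + (1 / R ^ 2) * h2 - (1 / R ^ 2) * h + (B ^ 2 / Δ - q / u) * h3

lemma c4aux (u A Δ R J : ℂ) (hu : u ≠ 0) (hΔ : Δ ≠ 0) (hR : R ≠ 0) :
    J * u⁻¹ + J * ((A / Δ - u⁻¹) / R ^ 2) * R ^ 2 + A * (-J / Δ) = 0 := by
  field_simp
  ring

lemma c5aux (A Δ B R : ℂ) (hΔ : Δ ≠ 0) (hAΔ : Δ = A ^ 2 - B ^ 2 * R ^ 2) :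
    -(B ^ 2) * R ^ 2 / Δ + A * (A / Δ) = 1 := by
  rw [mul_div_assoc', ← add_div]
  have h : -(B ^ 2) * R ^ 2 + A * A = Δ := by rw [hAΔ]; ring
  rw [h, div_self hΔ]

lemma c3aux (u A Δ q R J : ℂ) (hΔ : Δ ≠ 0) (hpq : u + q * R ^ 2 = A) :
    u * (J / Δ) + q * (J / Δ) * R ^ 2 + -J * (A / Δ) = 0 := by
  linear_combination (J / Δ) * hpq

lemma traceaux (u t2 t3 A : ℂ) (hu : u ≠ 0) (h2 : t2 ≠ 0) (h3 : t3 ≠ 0)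
    (hA : 2 * A = t2 + t3) (N : ℂ) :
    (N - 1) * u⁻¹ + (A / (t2 * t3) - u⁻¹) + A / (t2 * t3)
      = (N - 2) / u + 1 / t2 + 1 / t3 := by
  have k2 := mul_inv_cancel₀ h2
  have k3 := mul_inv_cancel₀ h3
  linear_combination (t2⁻¹ * t3⁻¹) * hA + t3⁻¹ * k2 + t2⁻¹ * k3

set_option maxHeartbeats 1000000 in
/-- Trace of the resolvent of the principal symbol of the elastic
Dirichlet-to-Neumann map. -/
theorem stmt8 (n : ℕ) (hn : 2 ≤ n) (μ lam : ℝ) (hμ : 0 < μ) (hlam : 0 < lam + μ)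
    (ξ : EuclideanSpace ℝ (Fin (n - 1))) (hξ : ξ ≠ 0)
    (P : Matrix (Fin (n - 1) ⊕ Unit) (Fin (n - 1) ⊕ Unit) ℂ)
    (hP : P = blkMat
      (fun j k => ((μ * ‖ξ‖ * (if j = k then 1 else 0)
        + μ * (lam + μ) / (lam + 3 * μ) * ξ j * ξ k / ‖ξ‖ : ℝ) : ℂ))
      (fun j => -(Complex.I * ((2 * μ ^ 2 / (lam + 3 * μ) * ξ j : ℝ) : ℂ)))
      (fun k => Complex.I * ((2 * μ ^ 2 / (lam + 3 * μ) * ξ k : ℝ) : ℂ))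
      ((2 * μ * (lam + 2 * μ) * ‖ξ‖ / (lam + 3 * μ) : ℝ) : ℂ))
    (τ : ℂ)
    (hτ₁ : τ ≠ ((μ * ‖ξ‖ : ℝ) : ℂ))
    (hτ₂ : τ ≠ ((2 * μ * ‖ξ‖ : ℝ) : ℂ))
    (hτ₃ : τ ≠ ((2 * μ * (lam + μ) * ‖ξ‖ / (lam + 3 * μ) : ℝ) : ℂ)) :
    IsUnit (P - τ • 1) ∧
    Matrix.trace (P - τ • 1)⁻¹ =
      ((n : ℂ) - 2) / (((μ * ‖ξ‖ : ℝ) : ℂ) - τ)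
        + 1 / (((2 * μ * ‖ξ‖ : ℝ) : ℂ) - τ)
        + 1 / (((2 * μ * (lam + μ) * ‖ξ‖ / (lam + 3 * μ) : ℝ) : ℂ) - τ) := by
  have hμ3 : (0:ℝ) < lam + 3 * μ := by linarith
  have hr : (0:ℝ) < ‖ξ‖ := norm_pos_iff.mpr hξ
  have hM : ((μ:ℝ):ℂ) ≠ 0 := Complex.ofReal_ne_zero.mpr hμ.ne'
  have hR : ((‖ξ‖:ℝ):ℂ) ≠ 0 := Complex.ofReal_ne_zero.mpr hr.ne'
  have hL3 : ((lam:ℝ):ℂ) + 3 * ((μ:ℝ):ℂ) ≠ 0 := by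
    have := Complex.ofReal_ne_zero.mpr hμ3.ne'
    push_cast at this
    convert this using 2 <;> ring
  have hp : ((μ:ℝ):ℂ) * ((‖ξ‖:ℝ):ℂ) - τ ≠ 0 := by
    rw [sub_ne_zero]
    intro h; exact hτ₁ (by rw [← h]; push_cast; ring)
  have h2 : 2 * ((μ:ℝ):ℂ) * ((‖ξ‖:ℝ):ℂ) - τ ≠ 0 := by
    rw [sub_ne_zero]
    intro h; exact hτ₂ (by rw [← h]; push_cast; ring)
  have h3 : 2 * ((μ:ℝ):ℂ) * (((lam:ℝ):ℂ) + ((μ:ℝ):ℂ)) * ((‖ξ‖:ℝ):ℂ) / (((lam:ℝ):ℂ) + 3 * ((μ:ℝ):ℂ)) - τ ≠ 0 := by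
    rw [sub_ne_zero]
    intro h; exact hτ₃ (by rw [← h]; push_cast; ring)
  have hs : (∑ l, ((ξ l : ℝ) : ℂ) ^ 2) = ((‖ξ‖:ℝ):ℂ) ^ 2 := by
    have hreal : (∑ l, (ξ l) ^ 2) = ‖ξ‖ ^ 2 := by
      rw [EuclideanSpace.norm_eq, Real.sq_sqrt (by positivity)]
      simp [Real.norm_eq_abs, sq_abs]
    exact_mod_cast hreal
  -- abbreviations
  set M : ℂ := ((μ:ℝ):ℂ) with hM_def
  set L : ℂ := ((lam:ℝ):ℂ) with hL_def
  set R : ℂ := ((‖ξ‖:ℝ):ℂ) with hR_def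
  set B : ℂ := 2 * M ^ 2 / (L + 3 * M) with hB_def
  set J : ℂ := Complex.I * B with hJ_def
  set q : ℂ := M * (L + M) / ((L + 3 * M) * R) with hq_def
  set A : ℂ := 2 * M * (L + 2 * M) * R / (L + 3 * M) - τ with hA_def
  set Δ : ℂ := (2 * M * R - τ) * (2 * M * (L + M) * R / (L + 3 * M) - τ) with hΔ_def
  have hΔ : Δ ≠ 0 := mul_ne_zero h2 h3
  have hJ2 : J * J = -(B ^ 2) := by
    rw [hJ_def, mul_mul_mul_comm, Complex.I_mul_I]; ring
  have hAΔ : Δ = A ^ 2 - B ^ 2 * R ^ 2 := by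
    have hL3' : L + M * 3 ≠ 0 := by rwa [mul_comm]
    rw [hΔ_def, hA_def, hB_def]; field_simp; ring
  have hpq : (M * R - τ) + q * R ^ 2 = A := by
    have hL3' : L + M * 3 ≠ 0 := by rwa [mul_comm]
    rw [hq_def, hA_def]; field_simp; ring
  have hR2 : R ^ 2 ≠ 0 := pow_ne_zero 2 hR
  -- expanded Δ nonzero
  have hΔ' : ((M * R - τ) + q * R ^ 2) ^ 2 - B ^ 2 * R ^ 2 ≠ 0 := by
    rw [hpq, ← hAΔ]; exact hΔ
  -- P - τ•1 in structured form
  have hPτ : P - τ • 1 = blkMat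
      (fun a b => (M * R - τ) * (if a = b then 1 else 0) + q * ((ξ a : ℝ) : ℂ) * ((ξ b : ℝ) : ℂ))
      (fun a => (-J) * ((ξ a : ℝ) : ℂ))
      (fun c => J * ((ξ c : ℝ) : ℂ)) A := by
    subst hP
    ext i j
    cases i <;> cases j <;>
      simp only [blkMat, Matrix.sub_apply, Matrix.smul_apply, one_apply, of_apply, smul_eq_mul,
        Sum.inl.injEq, Sum.inr.injEq, reduceCtorEq, if_false, mul_zero, sub_zero,
        if_true, mul_one, hq_def, hB_def, hA_def, hJ_def, hM_def, hL_def, hR_def]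
    · have hL3a : ((μ:ℂ) * 3 + (lam:ℂ)) ≠ 0 := by
        have := Complex.ofReal_ne_zero.mpr hμ3.ne'
        push_cast at this
        convert this using 1; ring
      have hRa : ((‖ξ‖:ℝ):ℂ) ≠ 0 := hR
      push_cast [apply_ite Complex.ofReal]
      split_ifs with h <;> (field_simp; try ring)
    · push_cast; ring
    · push_cast; ring
    · push_cast; ring
  -- the candidate inverse
  set Q : Matrix (Fin (n-1) ⊕ Unit) (Fin (n-1) ⊕ Unit) ℂ := blkMat
      (fun a b => (M * R - τ)⁻¹ * (if a = b then 1 else 0)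
        + ((A / Δ - (M * R - τ)⁻¹) / R ^ 2) * ((ξ a : ℝ) : ℂ) * ((ξ b : ℝ) : ℂ))
      (fun a => (J / Δ) * ((ξ a : ℝ) : ℂ))
      (fun c => (-J / Δ) * ((ξ c : ℝ) : ℂ)) (A / Δ) with hQ_def
  have hmul : (P - τ • 1) * Q = 1 := by
    rw [hPτ, hQ_def, blk_mul_blk, hs]
    have c1 : (M * R - τ) * (M * R - τ)⁻¹ = 1 := mul_inv_cancel₀ hp
    have c2 : (M * R - τ) * ((A / Δ - (M * R - τ)⁻¹) / R ^ 2)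
        + q * (M * R - τ)⁻¹ + q * ((A / Δ - (M * R - τ)⁻¹) / R ^ 2) * R ^ 2
        + (-J) * (-J / Δ) = 0 := by
      have hIb : (-J) * (-J / Δ) = -(B ^ 2) / Δ := by
        rw [show (-J) * (-J / Δ) = (J * J) / Δ by ring, hJ2]
      rw [hIb]
      exact c2aux _ _ _ _ _ _ hp hΔ hR hAΔ hpq
    have c3 : (M * R - τ) * (J / Δ) + q * (J / Δ) * R ^ 2 + (-J) * (A / Δ) = 0 := by
      exact c3aux _ _ _ _ _ _ hΔ hpq
    have c4 : J * (M * R - τ)⁻¹ + J * ((A / Δ - (M * R - τ)⁻¹) / R ^ 2) * R ^ 2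
        + A * (-J / Δ) = 0 := c4aux _ _ _ _ _ hp hΔ hR
    have c5 : J * (J / Δ) * R ^ 2 + A * (A / Δ) = 1 := by
      rw [show J * (J / Δ) * R ^ 2 = (J * J) * R ^ 2 / Δ by ring, hJ2,
        show -B ^ 2 * R ^ 2 / Δ = -(B ^ 2) * R ^ 2 / Δ by ring]
      exact c5aux _ _ _ _ hΔ hAΔ
    simp only [c1, c2, c3, c4, c5]
    ext i j
    cases i <;> cases j <;> simp [blkMat, one_apply]
  have hmul' : Q * (P - τ • 1) = 1 := mul_eq_one_comm.mp hmul
  have hinv : (P - τ • 1)⁻¹ = Q := inv_eq_right_inv hmul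
  refine ⟨⟨⟨P - τ • 1, Q, hmul, hmul'⟩, rfl⟩, ?_⟩
  rw [hinv, hQ_def]
  -- compute the trace
  have htr : Matrix.trace (blkMat
      (fun a b => (M * R - τ)⁻¹ * (if a = b then 1 else 0)
        + ((A / Δ - (M * R - τ)⁻¹) / R ^ 2) * ((ξ a : ℝ) : ℂ) * ((ξ b : ℝ) : ℂ))
      (fun a => (J / Δ) * ((ξ a : ℝ) : ℂ))
      (fun c => (-J / Δ) * ((ξ c : ℝ) : ℂ)) (A / Δ))
      = (n - 1 : ℕ) * (M * R - τ)⁻¹ + ((A / Δ - (M * R - τ)⁻¹) / R ^ 2) * R ^ 2 + A / Δ := by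
    rw [Matrix.trace]
    simp only [Fintype.sum_sum_type, Finset.univ_unique, Finset.sum_singleton,
      Matrix.diag, blkMat, of_apply, if_pos rfl, mul_one]
    rw [Finset.sum_add_distrib, Finset.sum_const, Finset.card_univ, Fintype.card_fin]
    have : ∑ a : Fin (n-1), ((A / Δ - (M * R - τ)⁻¹) / R ^ 2) * ((ξ a : ℝ) : ℂ) * ((ξ a : ℝ) : ℂ)
        = ((A / Δ - (M * R - τ)⁻¹) / R ^ 2) * R ^ 2 := by
      rw [← hs, Finset.mul_sum]
      exact Finset.sum_congr rfl fun x _ => by ring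
    rw [this, nsmul_eq_mul]
    simp
  rw [htr, div_mul_cancel₀ _ hR2]
  have hcast : ((n - 1 : ℕ) : ℂ) = (n : ℂ) - 1 := by
    push_cast [Nat.cast_sub (by omega : 1 ≤ n)]
    ring
  rw [hcast]
  -- final rational identity
  have hA2 : 2 * A = (2 * M * R - τ) + (2 * M * (L + M) * R / (L + 3 * M) - τ) := by
    have hL3' : L + M * 3 ≠ 0 := by rwa [mul_comm]
    rw [hA_def]; field_simp; ring
  have e1 : ((μ * ‖ξ‖ : ℝ) : ℂ) = M * R := by push_cast; rfl
  have e2 : ((2 * μ * ‖ξ‖ : ℝ) : ℂ) = 2 * M * R := by push_cast; rfl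
  have e3 : ((2 * μ * (lam + μ) * ‖ξ‖ / (lam + 3 * μ) : ℝ) : ℂ)
      = 2 * M * (L + M) * R / (L + 3 * M) := by push_cast; rfl
  rw [e1, e2, e3, hΔ_def]
  exact traceaux (M * R - τ) (2 * M * R - τ) (2 * M * (L + M) * R / (L + 3 * M) - τ) A
    hp h2 h3 hA2 (n : ℂ)
end

section
/- Let n ≥ 2 be an integer, let μ, λ be real numbers with μ > 0 and λ + μ > 0, and let ξ ∈ ℝ^{n−1} be nonzero. Let P be the n×n complex matrix with entries P_{jk} = μ‖ξ‖δ_{jk} + (μ(λ+μ)/(λ+3μ)) ξ_j ξ_k /‖ξ‖ for 1 ≤ j,k ≤ n−1, P_{jn} = −(2iμ²/(λ+3μ)) ξ_j and P_{nk} = (2iμ²/(λ+3μ)) ξ_k for 1 ≤ j,k ≤ n−1, and P_{nn} = 2μ(λ+2μ)‖ξ‖/(λ+3μ). Then for every τ ∈ ℂ, det(τ I_n − P) = (τ − μ‖ξ‖)^{n−2} (τ − 2μ‖ξ‖)(τ − 2μ(λ+μ)‖ξ‖/(λ+3μ)); i.e., P has eigenvalues μ‖ξ‖ with multiplicity n−2,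 2μ‖ξ‖ with multiplicity 1, and 2μ(λ+μ)‖ξ‖/(λ+3μ) with multiplicity 1. -/
open Matrix

open Polynomial in
lemma charpoly_eval'' {n : Type*} [DecidableEq n] [Fintype n] (M : Matrix n n ℂ) (t : ℂ) :
    M.charpoly.eval t = (t • 1 - M).det := by
  rw [Matrix.charpoly, _root_.eval_det, Matrix.matPolyEquiv_charmatrix]
  simp only [eval_sub, eval_X, eval_C]
  congr 1
  ext i j
  simp [Matrix.scalar_apply, Matrix.one_apply, Matrix.diagonal, Matrix.smul_apply]

lemma det_aux' {m : ℕ} (hm : 1 ≤ m) (α β : ℂ) (hα : α ≠ 0) (v : Fin m → ℂ) :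
    (α • 1 + β • vecMulVec v v).det = α ^ (m - 1) * (α + β * (v ⬝ᵥ v)) := by
  have h1 : α • (1 : Matrix (Fin m) (Fin m) ℂ) + β • vecMulVec v v
      = α • (1 + vecMulVec ((β / α) • v) v) := by
    rw [smul_add]
    congr 1
    ext i j
    simp [vecMulVec, Pi.smul_apply, smul_eq_mul]
    field_simp
  rw [h1, det_smul, vecMulVec_eq Unit, det_one_add_replicateCol_mul_replicateRow]
  have hcard : Fintype.card (Fin m) = m := by simp
  have hd : v ⬝ᵥ (β / α) • v = (β / α) * (v ⬝ᵥ v) := by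
    simp only [dotProduct, Pi.smul_apply, smul_eq_mul, Finset.mul_sum]
    apply Finset.sum_congr rfl
    intro i _
    ring
  rw [hcard, hd]
  have hpow : α ^ m = α ^ (m - 1) * α := by
    rw [← pow_succ]
    congr 1
    omega
  rw [hpow]
  field_simp

lemma key_det {m : ℕ} (hm : 1 ≤ m) (a b c d : ℂ) (v : Fin m → ℂ) (τ : ℂ)
    (hτa : τ ≠ a) (hτd : τ ≠ d) :
    (fromBlocks ((τ - a) • 1 - b • vecMulVec v v)
      (Matrix.of fun j (_ : Unit) => Complex.I * c * v j)
      (Matrix.of fun (_ : Unit) k => -(Complex.I * c * v k))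
      (Matrix.of fun (_ : Unit) (_ : Unit) => τ - d)).det
      = (τ - a) ^ (m - 1) * ((τ - a) * (τ - d) - (b * (τ - d) + c ^ 2) * (v ⬝ᵥ v)) := by
  have hτd' : τ - d ≠ 0 := sub_ne_zero.mpr hτd
  have hτa' : τ - a ≠ 0 := sub_ne_zero.mpr hτa
  set D : Matrix Unit Unit ℂ := Matrix.of fun _ _ => τ - d with hDdef
  have hD : D = (τ - d) • 1 := by
    ext i j
    simp [hDdef, Matrix.one_apply]
  have hD' : ((τ - d)⁻¹ • (1 : Matrix Unit Unit ℂ)) * D = 1 := by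
    rw [hD, smul_mul_smul_comm, inv_mul_cancel₀ hτd', one_mul, one_smul]
  have hD'' : D * ((τ - d)⁻¹ • (1 : Matrix Unit Unit ℂ)) = 1 := by
    rw [hD, smul_mul_smul_comm, mul_inv_cancel₀ hτd', one_mul, one_smul]
  letI : Invertible D := ⟨(τ - d)⁻¹ • 1, hD', hD''⟩
  have hinv : ⅟D = (τ - d)⁻¹ • (1 : Matrix Unit Unit ℂ) := rfl
  rw [det_fromBlocks₂₂, hinv]
  have hdetD : D.det = τ - d := by rw [hD]; simp [det_smul]
  have hBC : (Matrix.of fun j (_ : Unit) => Complex.I * c * v j)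
      * ((τ - d)⁻¹ • (1 : Matrix Unit Unit ℂ))
      * (Matrix.of fun (_ : Unit) k => -(Complex.I * c * v k))
      = (c ^ 2 * (τ - d)⁻¹) • vecMulVec v v := by
    ext i j
    simp [Matrix.mul_apply, vecMulVec, Matrix.one_apply, Fintype.sum_unique]
    ring_nf
    rw [Complex.I_sq]
    ring
  rw [hBC]
  have : (τ - a) • (1 : Matrix (Fin m) (Fin m) ℂ) - b • vecMulVec v v
      - (c ^ 2 * (τ - d)⁻¹) • vecMulVec v v
      = (τ - a) • 1 + (-(b + c ^ 2 * (τ - d)⁻¹)) • vecMulVec v v := by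
    rw [sub_sub, ← add_smul, sub_eq_add_neg, ← neg_smul]
  rw [this, det_aux' hm _ _ hτa' v, hdetD]
  field_simp
  ring

/-- Characteristic polynomial (eigenvalues with multiplicities) of the principal symbol
of the elastic Dirichlet-to-Neumann map. -/
theorem stmt9 (n : ℕ) (hn : 2 ≤ n) (μ lam : ℝ) (hμ : 0 < μ) (hlam : 0 < lam + μ)
    (ξ : EuclideanSpace ℝ (Fin (n - 1))) (hξ : ξ ≠ 0)
    (P : Matrix (Fin (n - 1) ⊕ Unit) (Fin (n - 1) ⊕ Unit) ℂ)
    (hP : P = blkMat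
      (fun j k => ((μ * ‖ξ‖ * (if j = k then 1 else 0)
        + μ * (lam + μ) / (lam + 3 * μ) * ξ j * ξ k / ‖ξ‖ : ℝ) : ℂ))
      (fun j => -(Complex.I * ((2 * μ ^ 2 / (lam + 3 * μ) * ξ j : ℝ) : ℂ)))
      (fun k => Complex.I * ((2 * μ ^ 2 / (lam + 3 * μ) * ξ k : ℝ) : ℂ))
      ((2 * μ * (lam + 2 * μ) * ‖ξ‖ / (lam + 3 * μ) : ℝ) : ℂ)) :
    ∀ τ : ℂ,
      Matrix.det (τ • 1 - P) =
        (τ - ((μ * ‖ξ‖ : ℝ) : ℂ)) ^ (n - 2) * (τ - ((2 * μ * ‖ξ‖ : ℝ) : ℂ))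
          * (τ - ((2 * μ * (lam + μ) * ‖ξ‖ / (lam + 3 * μ) : ℝ) : ℂ)) := by
  classical
  have h3 : (0 : ℝ) < lam + 3 * μ := by linarith
  have h3' : (lam + 3 * μ) ≠ 0 := ne_of_gt h3
  have hnorm : (0 : ℝ) < ‖ξ‖ := norm_pos_iff.mpr hξ
  have hnorm' : ‖ξ‖ ≠ 0 := ne_of_gt hnorm
  have hm : 1 ≤ n - 1 := by omega
  -- real constants
  set a : ℝ := μ * ‖ξ‖ with ha
  set b : ℝ := μ * (lam + μ) / (lam + 3 * μ) / ‖ξ‖ with hb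
  set c : ℝ := 2 * μ ^ 2 / (lam + 3 * μ) with hc
  set d : ℝ := 2 * μ * (lam + 2 * μ) * ‖ξ‖ / (lam + 3 * μ) with hd
  set x : ℝ := 2 * μ * ‖ξ‖ with hx
  set y : ℝ := 2 * μ * (lam + μ) * ‖ξ‖ / (lam + 3 * μ) with hy
  set s : ℝ := ‖ξ‖ ^ 2 with hsdef
  have hs : (∑ j, ξ j * ξ j) = s := by
    rw [hsdef, EuclideanSpace.norm_eq, Real.sq_sqrt (by positivity)]
    apply Finset.sum_congr rfl
    intro i _
    rw [Real.norm_eq_abs, sq_abs, sq]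
  -- real identities
  have r1 : a + b * s = d := by
    rw [ha, hb, hd, hsdef]
    field_simp [show lam + μ * 3 ≠ 0 by linarith]
    ring
  have r2 : d ^ 2 - c ^ 2 * s = x * y := by
    rw [hc, hd, hx, hy, hsdef]
    field_simp [show lam + μ * 3 ≠ 0 by linarith]
    ring
  have r3 : x + y = 2 * d := by
    rw [hd, hx, hy]
    field_simp [show lam + μ * 3 ≠ 0 by linarith]
    ring
  -- complex versions
  have e1 : ((a : ℂ)) + (b : ℂ) * (s : ℂ) = (d : ℂ) := by exact_mod_cast congrArg Complex.ofReal r1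
  have e2 : ((d : ℂ)) ^ 2 - (c : ℂ) ^ 2 * (s : ℂ) = (x : ℂ) * (y : ℂ) := by
    exact_mod_cast congrArg Complex.ofReal r2
  have e3 : ((x : ℂ)) + (y : ℂ) = 2 * (d : ℂ) := by exact_mod_cast congrArg Complex.ofReal r3
  set v : Fin (n - 1) → ℂ := fun j => ((ξ j : ℝ) : ℂ) with hv
  have hvv : v ⬝ᵥ v = (s : ℂ) := by
    rw [← hs]
    simp [dotProduct, hv]
  -- block decomposition of τ • 1 - P
  have hblock : ∀ τ : ℂ, τ • (1 : Matrix (Fin (n - 1) ⊕ Unit) (Fin (n - 1) ⊕ Unit) ℂ) - P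
      = fromBlocks ((τ - (a : ℂ)) • 1 - (b : ℂ) • vecMulVec v v)
        (Matrix.of fun j (_ : Unit) => Complex.I * (c : ℂ) * v j)
        (Matrix.of fun (_ : Unit) k => -(Complex.I * (c : ℂ) * v k))
        (Matrix.of fun (_ : Unit) (_ : Unit) => τ - (d : ℂ)) := by
    intro τ
    rw [hP]
    ext i j
    rcases i with i | _ <;> rcases j with j | _
    · by_cases hij : i = j <;>
        simp [blkMat, fromBlocks, vecMulVec, Matrix.one_apply, Matrix.smul_apply, hv, ha, hb, hc,
          hd, hij] <;> (try push_cast) <;> ring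
    all_goals
      simp [blkMat, fromBlocks, vecMulVec, Matrix.one_apply, Matrix.smul_apply, hv, ha, hb, hc,
        hd] <;> (try push_cast) <;> ring
  -- the determinant formula away from the two bad points
  have key : ∀ τ : ℂ, τ ≠ (a : ℂ) → τ ≠ (d : ℂ) →
      Matrix.det (τ • 1 - P) =
        (τ - ((μ * ‖ξ‖ : ℝ) : ℂ)) ^ (n - 2) * (τ - ((2 * μ * ‖ξ‖ : ℝ) : ℂ))
          * (τ - ((2 * μ * (lam + μ) * ‖ξ‖ / (lam + 3 * μ) : ℝ) : ℂ)) := by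
    intro τ hτa hτd
    rw [hblock τ, key_det hm _ _ _ _ _ _ hτa hτd, hvv]
    have hquad : (τ - (a : ℂ)) * (τ - (d : ℂ)) - ((b : ℂ) * (τ - (d : ℂ)) + (c : ℂ) ^ 2) * (s : ℂ)
        = (τ - (x : ℂ)) * (τ - (y : ℂ)) := by
      linear_combination ((d : ℂ) - τ) * e1 + e2 + τ * e3
    rw [hquad]
    have hexp : n - 1 - 1 = n - 2 := by omega
    rw [hexp, ha, hx, hy]
    ring
  -- extend to all τ via polynomial identity
  intro τ
  have hpq : P.charpoly = (Polynomial.X - Polynomial.C ((μ * ‖ξ‖ : ℝ) : ℂ)) ^ (n - 2)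
      * (Polynomial.X - Polynomial.C ((2 * μ * ‖ξ‖ : ℝ) : ℂ))
      * (Polynomial.X - Polynomial.C ((2 * μ * (lam + μ) * ‖ξ‖ / (lam + 3 * μ) : ℝ) : ℂ)) := by
    apply Polynomial.eq_of_infinite_eval_eq
    apply Set.Infinite.mono (s := ({(a : ℂ), (d : ℂ)} : Set ℂ)ᶜ)
    · intro t ht
      simp only [Set.mem_compl_iff, Set.mem_insert_iff, Set.mem_singleton_iff, not_or] at ht
      simp only [Set.mem_setOf_eq, Polynomial.eval_mul, Polynomial.eval_pow, Polynomial.eval_sub,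
        Polynomial.eval_X, Polynomial.eval_C]
      rw [charpoly_eval'']
      exact key t ht.1 ht.2
    · exact Set.Finite.infinite_compl ((Set.finite_singleton _).insert _)
  rw [← charpoly_eval'', hpq]
  simp only [Polynomial.eval_mul, Polynomial.eval_pow, Polynomial.eval_sub, Polynomial.eval_X,
    Polynomial.eval_C]
  rfl
end

section
/- Let n ≥ 2 be an integer, let μ, λ be real numbers with μ > 0 and λ + μ > 0, let ξ ∈ ℝ^{n−1} be nonzero, and let t > 0. Let P be the n×n complex matrix with entries P_{jk} = μ‖ξ‖δ_{jk} + (μ(λ+μ)/(λ+3μ)) ξ_j ξ_k /‖ξ‖ for 1 ≤ j,k ≤ n−1, P_{jn} = −(2iμ²/(λ+3μ)) ξ_j and P_{nk} = (2iμ²/(λ+3μ)) ξ_k for 1 ≤ j,k ≤ n−1, and P_{nn} = 2μ(λ+2μ)‖ξ‖/(λ+3μ). Then for every R > 2μ‖ξ‖, (1/(2πi)) ∮_{|τ|=R} e^{−tτ} Tr((P − τI_n)^{−1}) dτ = −( e^{−2μ‖ξ‖t} + e^{−2μ(λ+μ)‖ξ‖t/(λ+3μ)} + (n−2) e^{−μ‖ξ‖t}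 ), where the integral is over the counterclockwise-oriented circle of center 0 and radius R. -/
open Matrix

lemma symb_mul {m : ℕ} (v : Fin m → ℂ) (S : ℂ) (hS : ∑ l, v l * v l = S)
    (p q r₁ r₂ e p' q' r₁' r₂' e' : ℂ) :
    blkMat (fun j k => p * (if j = k then 1 else 0) + q * v j * v k)
        (fun j => r₁ * v j) (fun k => r₂ * v k) e *
      blkMat (fun j k => p' * (if j = k then 1 else 0) + q' * v j * v k)
        (fun j => r₁' * v j) (fun k => r₂' * v k) e' =
    blkMat (fun j k => p * p' * (if j = k then 1 else 0)
        + (p * q' + q * p' + q * q' * S + r₁ * r₂') * (v j * v k))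
      (fun j => (p * r₁' + q * r₁' * S + r₁ * e') * v j)
      (fun k => (r₂ * p' + r₂ * q' * S + e * r₂') * v k)
      (r₂ * r₁' * S + e * e') := by
  ext i j
  cases i with
  | inl a =>
    cases j with
    | inl b =>
      simp only [Matrix.mul_apply, blkMat, Matrix.of_apply, Fintype.sum_sum_type,
        Finset.sum_const, Finset.card_univ]
      rw [Finset.sum_congr rfl (fun l _ => by ring :
        ∀ l ∈ Finset.univ, (p * (if a = l then 1 else 0) + q * v a * v l) *
          (p' * (if l = b then 1 else 0) + q' * v l * v b)
        = p * p' * ((if a = l then 1 else 0) * (if l = b then 1 else 0))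
          + (p * q' * v b) * ((if a = l then 1 else 0) * v l)
          + (q * p' * v a) * (v l * (if l = b then 1 else 0))
          + (q * q' * v a * v b) * (v l * v l))]
      simp only [Finset.sum_add_distrib, ← Finset.mul_sum, hS]
      simp [Finset.sum_ite_eq, Finset.sum_ite_eq', ite_mul, mul_ite]
      ring
    | inr b =>
      simp only [Matrix.mul_apply, blkMat, Matrix.of_apply, Fintype.sum_sum_type]
      rw [Finset.sum_congr rfl (fun l _ => by ring :
        ∀ l ∈ Finset.univ, (p * (if a = l then 1 else 0) + q * v a * v l) * (r₁' * v l)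
        = (p * r₁') * ((if a = l then 1 else 0) * v l) + (q * r₁' * v a) * (v l * v l))]
      simp only [Finset.sum_add_distrib, ← Finset.mul_sum, hS]
      simp [Finset.sum_ite_eq, ite_mul]
      ring
  | inr a =>
    cases j with
    | inl b =>
      simp only [Matrix.mul_apply, blkMat, Matrix.of_apply, Fintype.sum_sum_type]
      rw [Finset.sum_congr rfl (fun l _ => by ring :
        ∀ l ∈ Finset.univ, (r₂ * v l) * (p' * (if l = b then 1 else 0) + q' * v l * v b)
        = (r₂ * p') * (v l * (if l = b then 1 else 0)) + (r₂ * q' * v b) * (v l * v l))]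
      simp only [Finset.sum_add_distrib, ← Finset.mul_sum, hS]
      simp [Finset.sum_ite_eq', mul_ite]
      ring
    | inr b =>
      simp only [Matrix.mul_apply, blkMat, Matrix.of_apply, Fintype.sum_sum_type]
      rw [Finset.sum_congr rfl (fun l _ => by ring :
        ∀ l ∈ Finset.univ, (r₂ * v l) * (r₁' * v l) = (r₂ * r₁') * (v l * v l))]
      simp only [← Finset.mul_sum, hS, Finset.sum_const, Finset.card_univ]
      simp


set_option maxHeartbeats 1000000 in
lemma trace_inv (m : ℕ) (s q g A B C W : ℂ) (hs : s ≠ 0)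
    (hW : W = A + B - C - q*s^2)
    (hdet : g^2*s^2 = (C + q*s^2)*W - A*B)
    (v : Fin m → ℂ) (hS : ∑ l, v l * v l = s^2)
    (hA : A ≠ 0) (hB : B ≠ 0) (hC : C ≠ 0)
    (M : Matrix (Fin m ⊕ Unit) (Fin m ⊕ Unit) ℂ)
    (hM : M = blkMat
      (fun j k => C * (if j = k then 1 else 0) + q * v j * v k)
      (fun j => (-(Complex.I * g)) * v j)
      (fun k => (Complex.I * g) * v k)
      W) :
    Matrix.trace M⁻¹ = A⁻¹ + B⁻¹ + ((m:ℂ) - 1) * C⁻¹ := by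
  have hκ : A * B * C * s^2 ≠ 0 := by
    exact mul_ne_zero (mul_ne_zero (mul_ne_zero hA hB) hC) (pow_ne_zero 2 hs)
  have hMN : M * blkMat
      (fun j k => (A*B*s^2) * (if j = k then 1 else 0) + (C*W - A*B) * v j * v k)
      (fun j => (Complex.I * g * C * s^2) * v j)
      (fun k => (-(Complex.I * g * C * s^2)) * v k)
      ((C + q*s^2) * C * s^2) = (A * B * C * s^2) • 1 := by
    rw [hM]
    rw [symb_mul v (s^2) hS]
    have e2 : C * (C*W - A*B) + q * (A*B*s^2) + q * (C*W - A*B) * (s^2)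
        + (-(Complex.I * g)) * (-(Complex.I * g * C * s^2)) = 0 := by
      linear_combination (g^2*C*s^2) * Complex.I_mul_I + (-C) * hdet
    have e3 : C * (Complex.I * g * C * s^2) + q * (Complex.I * g * C * s^2) * (s^2)
        + (-(Complex.I * g)) * ((C + q*s^2) * C * s^2) = 0 := by ring
    have e4 : (Complex.I * g) * (A*B*s^2) + (Complex.I * g) * (C*W - A*B) * (s^2)
        + W * (-(Complex.I * g * C * s^2)) = 0 := by ring
    have e5 : (Complex.I * g) * (Complex.I * g * C * s^2) * (s^2) + W * ((C + q*s^2) * C * s^2)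
        = A * B * C * s^2 := by
      linear_combination (g^2*C*s^4) * Complex.I_mul_I + (-(C*s^2)) * hdet
    ext i j
    cases i with
    | inl a =>
      cases j with
      | inl b =>
        simp only [blkMat, Matrix.of_apply, Matrix.smul_apply, Matrix.one_apply,
          Sum.inl.injEq, smul_eq_mul]
        rw [e2]
        split_ifs <;> ring
      | inr b =>
        simp only [blkMat, Matrix.of_apply, Matrix.smul_apply, Matrix.one_apply, smul_eq_mul]
        rw [e3]
        simp
    | inr a =>
      cases j with
      | inl b =>
        simp only [blkMat, Matrix.of_apply, Matrix.smul_apply, Matrix.one_apply, smul_eq_mul]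
        rw [e4]
        simp
      | inr b =>
        simp only [blkMat, Matrix.of_apply, Matrix.smul_apply, Matrix.one_apply, smul_eq_mul]
        rw [e5]
        simp
  have hinv : M⁻¹ = (A * B * C * s^2)⁻¹ • blkMat
      (fun j k => (A*B*s^2) * (if j = k then 1 else 0) + (C*W - A*B) * v j * v k)
      (fun j => (Complex.I * g * C * s^2) * v j)
      (fun k => (-(Complex.I * g * C * s^2)) * v k)
      ((C + q*s^2) * C * s^2) := by
    apply inv_eq_right_inv
    rw [Matrix.mul_smul, hMN, smul_smul, inv_mul_cancel₀ hκ, one_smul]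
  rw [hinv, Matrix.trace_smul]
  rw [Matrix.trace]
  simp only [Matrix.diag, blkMat, Matrix.of_apply, Fintype.sum_sum_type,
    Finset.univ_unique, Finset.sum_singleton]
  rw [show ∑ x : Fin m, ((A*B*s^2) * (if True then 1 else 0) + (C*W - A*B) * v x * v x)
      = (m : ℂ) * (A*B*s^2) + (C*W - A*B) * s^2 from by
    simp only [if_true, mul_one]
    rw [Finset.sum_add_distrib, Finset.sum_const, Finset.card_univ, Fintype.card_fin]
    rw [Finset.sum_congr rfl (fun l _ => by ring :
      ∀ l ∈ Finset.univ, (C*W - A*B) * v l * v l = (C*W - A*B) * (v l * v l))]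
    rw [← Finset.mul_sum, hS, nsmul_eq_mul]]
  rw [smul_eq_mul, hW]
  field_simp
  ring

set_option maxHeartbeats 4000000 in
set_option maxHeartbeats 4000000 in
/-- Contour integral of `e^{−tτ} Tr((P − τI)^{−1})` over a large circle enclosing all
eigenvalues of the principal symbol `P` of the elastic Dirichlet-to-Neumann map. -/
theorem stmt11 (n : ℕ) (hn : 2 ≤ n) (μ lam : ℝ) (hμ : 0 < μ) (hlam : 0 < lam + μ)
    (ξ : EuclideanSpace ℝ (Fin (n - 1))) (hξ : ξ ≠ 0) (t : ℝ) (ht : 0 < t)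
    (P : Matrix (Fin (n - 1) ⊕ Unit) (Fin (n - 1) ⊕ Unit) ℂ)
    (hP : P = blkMat
      (fun j k => ((μ * ‖ξ‖ * (if j = k then 1 else 0)
        + μ * (lam + μ) / (lam + 3 * μ) * ξ j * ξ k / ‖ξ‖ : ℝ) : ℂ))
      (fun j => -(Complex.I * ((2 * μ ^ 2 / (lam + 3 * μ) * ξ j : ℝ) : ℂ)))
      (fun k => Complex.I * ((2 * μ ^ 2 / (lam + 3 * μ) * ξ k : ℝ) : ℂ))
      ((2 * μ * (lam + 2 * μ) * ‖ξ‖ / (lam + 3 * μ) : ℝ) : ℂ))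
    (R : ℝ) (hR : 2 * μ * ‖ξ‖ < R) :
    (1 / (2 * (Real.pi : ℂ) * Complex.I)) *
      (∮ τ in C(0, R), Complex.exp (-(t : ℂ) * τ) * Matrix.trace (P - τ • 1)⁻¹) =
    -(Complex.exp (-((2 * μ * ‖ξ‖ * t : ℝ) : ℂ))
      + Complex.exp (-((2 * μ * (lam + μ) * ‖ξ‖ * t / (lam + 3 * μ) : ℝ) : ℂ))
      + ((n : ℂ) - 2) * Complex.exp (-((μ * ‖ξ‖ * t : ℝ) : ℂ))) := by
  have hs0 : (0:ℝ) < ‖ξ‖ := norm_pos_iff.mpr hξ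
  have hL0 : (0:ℝ) < lam + 3 * μ := by linarith
  have hR0 : (0:ℝ) < R := lt_trans (by positivity) hR
  have hsC : ((‖ξ‖:ℝ):ℂ) ≠ 0 := Complex.ofReal_ne_zero.mpr hs0.ne'
  have hLC : ((lam:ℝ):ℂ) + 3 * ((μ:ℝ):ℂ) ≠ 0 := by
    rw [show ((lam:ℝ):ℂ) + 3 * ((μ:ℝ):ℂ) = (((lam + 3*μ : ℝ)):ℂ) from by push_cast; ring]
    exact Complex.ofReal_ne_zero.mpr hL0.ne'
  have hbRlt : 2 * μ * (lam + μ) * ‖ξ‖ / (lam + 3 * μ) < R := by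
    rw [div_lt_iff₀ hL0]
    nlinarith [hR, hs0, hμ]
  have hcRlt : μ * ‖ξ‖ < R := by nlinarith [hR, hs0, hμ]
  set v : Fin (n-1) → ℂ := fun j => ((ξ j : ℝ) : ℂ) with hv
  have hS : ∑ l, v l * v l = ((‖ξ‖:ℝ):ℂ)^2 := by
    have h1 : ‖ξ‖^2 = ∑ l, (ξ l)^2 := by
      rw [EuclideanSpace.norm_eq, Real.sq_sqrt (by positivity)]
      exact Finset.sum_congr rfl fun l _ => by rw [Real.norm_eq_abs, sq_abs]
    rw [hv, show (((‖ξ‖:ℝ)):ℂ)^2 = ((‖ξ‖^2 : ℝ):ℂ) from by push_cast; ring, h1]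
    push_cast
    exact Finset.sum_congr rfl fun l _ => by ring
  have hne : ∀ (x : ℝ), 0 ≤ x → x < R → ∀ z ∈ Metric.sphere (0:ℂ) R, ((x:ℝ):ℂ) - z ≠ 0 := by
    intro x hx hxR z hz h
    rw [mem_sphere_zero_iff_norm] at hz
    rw [← sub_eq_zero.mp h, Complex.norm_real, Real.norm_eq_abs, abs_of_nonneg hx] at hz
    linarith
  -- the trace identity on the sphere
  have key : ∀ z ∈ Metric.sphere (0:ℂ) R,
      Matrix.trace (P - z • 1)⁻¹
        = (((2 * μ * ‖ξ‖ : ℝ):ℂ) - z)⁻¹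
          + (((2 * μ * (lam + μ) * ‖ξ‖ / (lam + 3 * μ) : ℝ):ℂ) - z)⁻¹
          + (((n - 1 : ℕ):ℂ) - 1) * (((μ * ‖ξ‖ : ℝ):ℂ) - z)⁻¹ := by
    intro z hz
    refine trace_inv (n-1) ((‖ξ‖:ℝ):ℂ)
      ((μ * (lam + μ) / (lam + 3 * μ) / ‖ξ‖ : ℝ):ℂ)
      ((2 * μ ^ 2 / (lam + 3 * μ) : ℝ):ℂ)
      _ _ _ (((2 * μ * (lam + 2 * μ) * ‖ξ‖ / (lam + 3 * μ) : ℝ):ℂ) - z)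
      hsC ?_ ?_ v hS
      (hne _ (by positivity) hR z hz)
      (hne _ (by positivity) hbRlt z hz)
      (hne _ (by positivity) hcRlt z hz) _ ?_
    · -- hW
      push_cast
      field_simp [show ((lam:ℝ):ℂ) + ((μ:ℝ):ℂ)*3 ≠ 0 by rw [mul_comm]; exact hLC]
      ring
    · -- hdet
      push_cast
      field_simp [show ((lam:ℝ):ℂ) + ((μ:ℝ):ℂ)*3 ≠ 0 by rw [mul_comm]; exact hLC]
      ring
    · -- hM
      rw [hP]
      ext i j
      cases i with
      | inl a =>
        cases j with
        | inl b =>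
          simp only [blkMat, Matrix.of_apply, Matrix.sub_apply, Matrix.smul_apply,
            Matrix.one_apply, Sum.inl.injEq, smul_eq_mul]
          split_ifs <;> push_cast <;> ring
        | inr b =>
          simp only [blkMat, Matrix.of_apply, Matrix.sub_apply, Matrix.smul_apply,
            Matrix.one_apply, smul_eq_mul, if_neg (by simp : ¬ (Sum.inl a = Sum.inr b))]
          push_cast
          ring
      | inr a =>
        cases j with
        | inl b =>
          simp only [blkMat, Matrix.of_apply, Matrix.sub_apply, Matrix.smul_apply,
            Matrix.one_apply, smul_eq_mul, if_neg (by simp : ¬ (Sum.inr a = Sum.inl b))]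
          push_cast
          ring
        | inr b =>
          simp only [blkMat, Matrix.of_apply, Matrix.sub_apply, Matrix.smul_apply,
            Matrix.one_apply, smul_eq_mul, if_pos (by simp : (Sum.inr a : Fin (n-1) ⊕ Unit) = Sum.inr b)]
          push_cast
          ring
  -- analysis part
  set F : ℂ → ℂ := fun z => Complex.exp (-(t:ℂ) * z) with hF
  have hFd : Differentiable ℂ F := (differentiable_id.const_mul (-(t:ℂ))).cexp
  have cauchy : ∀ w : ℂ, ‖w‖ < R →
      (∮ z in C(0,R), (z - w)⁻¹ * F z) = 2 * (Real.pi:ℂ) * Complex.I * F w := by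
    intro w hw
    have := hFd.differentiableOn.circleIntegral_sub_inv_smul (c := 0) (R := R)
      (mem_ball_zero_iff.mpr hw)
    simpa [smul_eq_mul] using this
  have hcont : ∀ w : ℂ, ‖w‖ < R →
      ContinuousOn (fun z => (z - w)⁻¹ * F z) (Metric.sphere (0:ℂ) R) := by
    intro w hw
    apply ContinuousOn.mul
    · apply ContinuousOn.inv₀ ((continuous_id.sub continuous_const).continuousOn)
      intro z hz h
      rw [mem_sphere_zero_iff_norm] at hz
      simp only [Pi.sub_apply, id_eq] at h
      rw [sub_eq_zero] at h
      rw [h] at hz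
      linarith
    · exact hFd.continuous.continuousOn
  have hnorm : ∀ (x : ℝ), 0 ≤ x → x < R → ‖((x:ℝ):ℂ)‖ < R := by
    intro x hx hxR
    rw [Complex.norm_real, Real.norm_eq_abs, abs_of_nonneg hx]
    exact hxR
  have hwa := hnorm _ (by positivity) hR
  have hwb := hnorm _ (by positivity) hbRlt
  have hwc := hnorm _ (by positivity) hcRlt
  set k : ℂ := ((n:ℂ) - 2) with hk
  have hcast : (((n - 1 : ℕ):ℂ) - 1) = k := by
    rw [hk, Nat.cast_sub (by omega : 1 ≤ n)]
    push_cast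
    ring
  -- rewrite the integrand
  have heqon : Set.EqOn (fun z => Complex.exp (-(t:ℂ) * z) * Matrix.trace (P - z • 1)⁻¹)
      (fun z => (-1 : ℂ) • ((z - ((2 * μ * ‖ξ‖ : ℝ):ℂ))⁻¹ * F z)
        - (((z - ((2 * μ * (lam + μ) * ‖ξ‖ / (lam + 3 * μ) : ℝ):ℂ))⁻¹ * F z)
          - (-k) • ((z - ((μ * ‖ξ‖ : ℝ):ℂ))⁻¹ * F z)))
      (Metric.sphere (0:ℂ) R) := by
    intro z hz
    simp only
    rw [key z hz, hcast]
    rw [show (((2 * μ * ‖ξ‖ : ℝ):ℂ) - z)⁻¹ = -(z - ((2 * μ * ‖ξ‖ : ℝ):ℂ))⁻¹ from by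
      rw [← inv_neg]; ring_nf]
    rw [show (((2 * μ * (lam + μ) * ‖ξ‖ / (lam + 3 * μ) : ℝ):ℂ) - z)⁻¹
        = -(z - ((2 * μ * (lam + μ) * ‖ξ‖ / (lam + 3 * μ) : ℝ):ℂ))⁻¹ from by
      rw [← inv_neg]; ring_nf]
    rw [show (((μ * ‖ξ‖ : ℝ):ℂ) - z)⁻¹ = -(z - ((μ * ‖ξ‖ : ℝ):ℂ))⁻¹ from by
      rw [← inv_neg]; ring_nf]
    simp only [smul_eq_mul, hF]
    ring
  rw [circleIntegral.integral_congr hR0.le heqon]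
  erw [circleIntegral.integral_sub
    (((hcont _ hwa).const_smul (-1 : ℂ)).circleIntegrable hR0.le)
    (((hcont _ hwb).sub ((hcont _ hwc).const_smul (-k))).circleIntegrable hR0.le)]
  erw [circleIntegral.integral_sub
    ((hcont _ hwb).circleIntegrable hR0.le)
    (((hcont _ hwc).const_smul (-k)).circleIntegrable hR0.le)]
  simp only [Pi.smul_apply]; rw [circleIntegral.integral_smul, circleIntegral.integral_smul]
  rw [cauchy _ hwa, cauchy _ hwb, cauchy _ hwc]
  have hπ : 2 * (Real.pi:ℂ) * Complex.I ≠ 0 := by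
    simp [Real.pi_ne_zero, Complex.I_ne_zero]
  have hFa : F ((2 * μ * ‖ξ‖ : ℝ):ℂ) = Complex.exp (-((2 * μ * ‖ξ‖ * t : ℝ) : ℂ)) := by
    simp only [hF]; exact congrArg Complex.exp (by push_cast; ring)
  have hFb : F ((2 * μ * (lam + μ) * ‖ξ‖ / (lam + 3 * μ) : ℝ):ℂ)
      = Complex.exp (-((2 * μ * (lam + μ) * ‖ξ‖ * t / (lam + 3 * μ) : ℝ) : ℂ)) := by
    simp only [hF]; exact congrArg Complex.exp (by push_cast; ring)
  have hFc : F ((μ * ‖ξ‖ : ℝ):ℂ) = Complex.exp (-((μ * ‖ξ‖ * t : ℝ) : ℂ)) := by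
    simp only [hF]; exact congrArg Complex.exp (by push_cast; ring)
  rw [hFa, hFb, hFc]
  simp only [smul_eq_mul]
  field_simp
  ring
end
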